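/- arXiv:2303.00876 — 4 statements merged into one kernel-verified Lean document; each statement's English description precedes it below -/
import Mathlib

section
/- If a ∈ ℓ^∞ and |a_k| converges as k → ∞, then lim_{k→∞} |a_k| ≤ w(T_a). -/
open Filter Finset Topology

/-- The numerical range of the weighted forward shift `T_a` on `ℓ²`:
values `⟨T_a x, x⟩ = ∑ a_k x_k conj (x_{k+1})` over unit vectors `x ∈ ℓ²`. -/
noncomputable def numRange (a : ℕ → ℂ) : Set ℂ :=
  {z | ∃ x : ℕ → ℂ, (∑' k, ‖x k‖ ^ 2) = (1 : ℝ) ∧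
    z = ∑' k, a k * x k * (starRingEnd ℂ) (x (k + 1))}

/-- The numerical radius `w(T_a)` of the weighted forward shift. -/
noncomputable def numRad (a : ℕ → ℂ) : ℝ := sSup ((fun z : ℂ => ‖z‖) '' numRange a)

/-- `a ∈ ℓ^∞`. -/
def IsBddSeq (a : ℕ → ℂ) : Prop := ∃ C : ℝ, ∀ k, ‖a k‖ ≤ C

/-- The uniform norm `‖a‖_∞`. -/
noncomputable def supNorm (a : ℕ → ℂ) : ℝ := ⨆ k, ‖a k‖

/-- `sup_{j ∈ ℕ} (1/n) ∑_{k=1}^n |a_{k+j-1}|` (0-based indexing). -/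
noncomputable def avgSup (a : ℕ → ℂ) (n : ℕ) : ℝ :=
  ⨆ j : ℕ, (∑ k ∈ Finset.range n, ‖a (k + j)‖) / n

/-- `sup_{j ∈ ℕ} (∏_{k=1}^n |a_{k+j-1}|)^{1/n}` (0-based indexing). -/
noncomputable def prodSup (a : ℕ → ℂ) (n : ℕ) : ℝ :=
  ⨆ j : ℕ, (∏ k ∈ Finset.range n, ‖a (k + j)‖) ^ ((1 : ℝ) / n)


noncomputable def ph (a : ℕ → ℂ) : ℕ → ℂ
  | 0 => 1
  | k+1 => if a k = 0 then ph a k else (a k / (‖a k‖ : ℂ)) * ph a k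

lemma ph_norm (a : ℕ → ℂ) : ∀ k, ‖ph a k‖ = 1
  | 0 => by simp [ph]
  | k+1 => by
    by_cases h : a k = 0
    · simpa [ph, h] using ph_norm a k
    · have := ph_norm a k
      simp [ph, h, norm_mul, norm_div, this]

lemma ph_key (a : ℕ → ℂ) (k : ℕ) :
    a k * ph a k * (starRingEnd ℂ) (ph a (k+1)) = (‖a k‖ : ℂ) := by
  by_cases h : a k = 0
  · simp [ph, h]
  · have h1 : (‖a k‖ : ℂ) ≠ 0 := by
      simpa using norm_ne_zero_iff.2 h
    have h2 : ph a k * (starRingEnd ℂ) (ph a k) = 1 := by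
      rw [Complex.mul_conj', ph_norm]; norm_num
    have h3 : a k * (starRingEnd ℂ) (a k) = (‖a k‖:ℂ)^2 := Complex.mul_conj' _
    show a k * ph a k * (starRingEnd ℂ) (if a k = 0 then ph a k else (a k / (‖a k‖:ℂ)) * ph a k) = _
    rw [if_neg h, map_mul, map_div₀, Complex.conj_ofReal]
    have h4 : a k * ph a k * ((starRingEnd ℂ) (a k) / (‖a k‖:ℂ) * (starRingEnd ℂ) (ph a k)) =
        (a k * (starRingEnd ℂ) (a k)) * (ph a k * (starRingEnd ℂ) (ph a k)) / (‖a k‖:ℂ) := by ring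
    rw [h4, h3, h2, mul_one, sq, mul_div_assoc, div_self h1, mul_one]


noncomputable def vec (a : ℕ → ℂ) (j n : ℕ) : ℕ → ℂ := fun k =>
  if k ∈ Finset.Ico j (j + (n+1)) then ph a k * ((Real.sqrt (n+1))⁻¹ : ℝ) else 0

lemma vec_norm_sum (a : ℕ → ℂ) (j n : ℕ) :
    (∑' k, ‖vec a j n k‖ ^ 2) = (1 : ℝ) := by
  have hpos : (0:ℝ) < (n:ℝ) + 1 := by positivity
  have h0 : ∀ k ∉ Finset.Ico j (j + (n+1)), ‖vec a j n k‖ ^ 2 = 0 := by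
    intro k hk; simp [vec, hk]
  rw [tsum_eq_sum h0]
  have h1 : ∀ k ∈ Finset.Ico j (j + (n+1)), ‖vec a j n k‖ ^ 2 = ((n:ℝ)+1)⁻¹ := by
    intro k hk
    have : ‖vec a j n k‖ = (Real.sqrt ((n:ℝ)+1))⁻¹ := by
      simp only [vec, if_pos hk, norm_mul, ph_norm, one_mul, Complex.norm_real]
      exact abs_of_nonneg (by positivity)
    rw [this, inv_pow, Real.sq_sqrt hpos.le]
  rw [Finset.sum_congr rfl h1, Finset.sum_const, Nat.card_Ico]
  rw [Nat.add_sub_cancel_left, nsmul_eq_mul, Nat.cast_add, Nat.cast_one]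
  field_simp

lemma vec_val (a : ℕ → ℂ) (j n : ℕ) :
    (∑' k, a k * vec a j n k * (starRingEnd ℂ) (vec a j n (k + 1)))
      = (((∑ k ∈ Finset.Ico j (j+n), ‖a k‖) / ((n:ℝ)+1) : ℝ) : ℂ) := by
  have hpos : (0:ℝ) < (n:ℝ) + 1 := by positivity
  have h0 : ∀ k ∉ Finset.Ico j (j + n),
      a k * vec a j n k * (starRingEnd ℂ) (vec a j n (k + 1)) = 0 := by
    intro k hk
    simp only [Finset.mem_Ico, not_and_or, not_le, not_lt] at hk
    rcases hk with hk | hk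
    · have : vec a j n k = 0 := by
        simp only [vec, Finset.mem_Ico, if_neg]
        simp only [ite_eq_right_iff]
        intro h; omega
      simp [this]
    · have : vec a j n (k+1) = 0 := by
        simp only [vec, ite_eq_right_iff, Finset.mem_Ico]
        intro h; omega
      simp [this]
  rw [tsum_eq_sum h0]
  have h1 : ∀ k ∈ Finset.Ico j (j + n),
      a k * vec a j n k * (starRingEnd ℂ) (vec a j n (k + 1))
        = ((‖a k‖ / ((n:ℝ)+1) : ℝ) : ℂ) := by
    intro k hk
    rw [Finset.mem_Ico] at hk
    have hk1 : k ∈ Finset.Ico j (j + (n+1)) := by rw [Finset.mem_Ico]; omega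
    have hk2 : k + 1 ∈ Finset.Ico j (j + (n+1)) := by rw [Finset.mem_Ico]; omega
    have hc : (starRingEnd ℂ) (((Real.sqrt ((n:ℝ)+1))⁻¹ : ℝ) : ℂ)
        = (((Real.sqrt ((n:ℝ)+1))⁻¹ : ℝ) : ℂ) := Complex.conj_ofReal _
    simp only [vec, if_pos hk1, if_pos hk2]
    rw [map_mul, hc]
    set c : ℝ := (Real.sqrt ((n:ℝ)+1))⁻¹ with hcdef
    have : a k * (ph a k * (c : ℂ)) *
        ((starRingEnd ℂ) (ph a (k+1)) * (c : ℂ))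
        = (a k * ph a k * (starRingEnd ℂ) (ph a (k+1))) *
          ((c : ℂ) * (c : ℂ)) := by ring
    rw [this, ph_key, ← Complex.ofReal_mul]
    have hs : (c * c : ℝ) = (((n:ℝ)+1))⁻¹ := by
      rw [hcdef, ← mul_inv, Real.mul_self_sqrt hpos.le]
    rw [hs, ← Complex.ofReal_mul]
    push_cast
    ring
  rw [Finset.sum_congr rfl h1]
  push_cast
  rw [Finset.sum_div]

lemma avg_mem (a : ℕ → ℂ) (j n : ℕ) :
    ((∑ k ∈ Finset.Ico j (j+n), ‖a k‖) / ((n:ℝ)+1) : ℝ)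
      ∈ (fun z : ℂ => ‖z‖) '' numRange a := by
  refine ⟨(((∑ k ∈ Finset.Ico j (j+n), ‖a k‖) / ((n:ℝ)+1) : ℝ) : ℂ),
    ⟨vec a j n, vec_norm_sum a j n, (vec_val a j n).symm⟩, ?_⟩
  simp only [Complex.norm_real]
  exact abs_of_nonneg (by positivity)

set_option maxHeartbeats 1000000 in
lemma numRange_bdd (a : ℕ → ℂ) (ha : IsBddSeq a) :
    BddAbove ((fun z : ℂ => ‖z‖) '' numRange a) := by
  obtain ⟨C, hC⟩ := ha
  set C' := max C 0 with hC'
  have hC0 : 0 ≤ C' := le_max_right _ _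
  have hC1 : ∀ k, ‖a k‖ ≤ C' := fun k => (hC k).trans (le_max_left _ _)
  refine ⟨C', ?_⟩
  rintro r ⟨z, ⟨x, hx1, rfl⟩, rfl⟩
  have hs : Summable (fun k => ‖x k‖ ^ 2) := by
    by_contra h
    rw [tsum_eq_zero_of_not_summable h] at hx1
    norm_num at hx1
  have hshift : Summable (fun k => ‖x (k+1)‖ ^ 2) := (summable_nat_add_iff 1).2 hs
  have hshift_le : (∑' k, ‖x (k+1)‖ ^ 2) ≤ 1 := by
    have h2 := Summable.sum_add_tsum_nat_add 1 hs
    rw [← hx1, ← h2]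
    simp only [Finset.sum_range_one, le_add_iff_nonneg_left]
    positivity
  have hdom : ∀ k, ‖a k * x k * (starRingEnd ℂ) (x (k+1))‖ ≤
      C'/2 * (‖x k‖^2 + ‖x (k+1)‖^2) := by
    intro k
    rw [norm_mul, norm_mul, RCLike.norm_conj]
    have e1 : ‖a k‖ * ‖x k‖ * ‖x (k+1)‖ ≤ C' * (‖x k‖ * ‖x (k+1)‖) := by
      rw [mul_assoc]
      exact mul_le_mul_of_nonneg_right (hC1 k)
        (mul_nonneg (norm_nonneg (x k)) (norm_nonneg (x (k+1))))
    have e2 : C' * (2 * ‖x k‖ * ‖x (k+1)‖) ≤ C' * (‖x k‖^2 + ‖x (k+1)‖^2) :=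
      mul_le_mul_of_nonneg_left (two_mul_le_add_sq (‖x k‖) (‖x (k+1)‖)) hC0
    linarith
  have hdoms : Summable (fun k => C'/2 * (‖x k‖^2 + ‖x (k+1)‖^2)) := (hs.add hshift).mul_left _
  have hns : Summable (fun k => ‖a k * x k * (starRingEnd ℂ) (x (k+1))‖) :=
    Summable.of_nonneg_of_le (fun k => norm_nonneg _) hdom hdoms
  have hfs : Summable (fun k => a k * x k * (starRingEnd ℂ) (x (k+1))) :=
    Summable.of_norm hns
  calc ‖∑' k, a k * x k * (starRingEnd ℂ) (x (k+1))‖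
      ≤ ∑' k, ‖a k * x k * (starRingEnd ℂ) (x (k+1))‖ := norm_tsum_le_tsum_norm hns
    _ ≤ ∑' k, C'/2 * (‖x k‖^2 + ‖x (k+1)‖^2) := Summable.tsum_le_tsum hdom hns hdoms
    _ = C'/2 * ((∑' k, ‖x k‖^2) + ∑' k, ‖x (k+1)‖^2) := by
        rw [tsum_mul_left, Summable.tsum_add hs hshift]
    _ ≤ C'/2 * (1 + 1) := by
        apply mul_le_mul_of_nonneg_left _ (by positivity)
        rw [hx1]
        linarith
    _ = C' := by ring

theorem stmt3 (a : ℕ → ℂ) (ha : IsBddSeq a) (l : ℝ)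
    (hc : Tendsto (fun k : ℕ => ‖a k‖) atTop (𝓝 l)) :
    l ≤ numRad a := by
  have hbdd := numRange_bdd a ha
  refine le_of_forall_pos_le_add ?_
  intro ε hε
  obtain ⟨K, hK⟩ := (Metric.tendsto_atTop.1 hc) (ε/2) (by positivity)
  set n := Nat.ceil (2 * max l 0 / ε) with hn
  have hle : ((∑ k ∈ Finset.Ico K (K+n), ‖a k‖) / ((n:ℝ)+1)) ≤ numRad a :=
    le_csSup hbdd (avg_mem a K n)
  have hsum : (n:ℝ) * (l - ε/2) ≤ ∑ k ∈ Finset.Ico K (K+n), ‖a k‖ := by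
    calc (n:ℝ) * (l - ε/2) = ∑ _k ∈ Finset.Ico K (K+n), (l - ε/2) := by
          rw [Finset.sum_const, Nat.card_Ico, Nat.add_sub_cancel_left, nsmul_eq_mul]
      _ ≤ _ := by
          refine Finset.sum_le_sum fun k hk => ?_
          have h1 := hK k (by rw [Finset.mem_Ico] at hk; omega)
          rw [Real.dist_eq] at h1
          have h2 := abs_lt.1 h1
          linarith [h2.1]
  have key : l - ε ≤ ((∑ k ∈ Finset.Ico K (K+n), ‖a k‖) / ((n:ℝ)+1)) := by
    by_cases hcase : l - ε/2 ≤ 0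
    · have hp : 0 ≤ (∑ k ∈ Finset.Ico K (K+n), ‖a k‖) / ((n:ℝ)+1) := by positivity
      linarith
    · push_neg at hcase
      have hl0 : 0 < l := by linarith
      have hnge : 2 * l / ε ≤ (n:ℝ) := by
        calc 2*l/ε = 2 * max l 0 / ε := by rw [max_eq_left hl0.le]
          _ ≤ (n:ℝ) := Nat.le_ceil _
      have h2l : 2*l ≤ (n:ℝ) * ε := (div_le_iff₀ hε).1 hnge
      have hnpos : (0:ℝ) < (n:ℝ)+1 := by positivity
      rw [le_div_iff₀ hnpos]
      nlinarith
  linarith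
end

section
/- If a = a₁ + a₂ where a₁ ∈ ℓ^∞ is periodic with period N and a₂ is a convergent sequence, then |(1/N) Σ_{k=1}^N (a₁)_k + lim_{k→∞} (a₂)_k| ≤ w(T_a). -/
open Filter Finset Topology

/- ### Auxiliary lemmas -/

set_option maxHeartbeats 1000000 in
lemma aux_norm_le_of_mem {a : ℕ → ℂ} {C : ℝ} (hC : ∀ k, ‖a k‖ ≤ C)
    {z : ℂ} (hz : z ∈ numRange a) : ‖z‖ ≤ C := by
  obtain ⟨x, hx1, rfl⟩ := hz
  have hC0 : 0 ≤ C := le_trans (norm_nonneg _) (hC 0)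
  have hg : Summable (fun k => ‖x k‖ ^ 2) := by
    by_contra hs
    rw [tsum_eq_zero_of_not_summable hs] at hx1
    norm_num at hx1
  have hg' : Summable (fun k => ‖x (k + 1)‖ ^ 2) := (summable_nat_add_iff 1).2 hg
  set f : ℕ → ℂ := fun k => a k * x k * (starRingEnd ℂ) (x (k + 1)) with hf
  have hb : ∀ k, ‖f k‖ ≤ C * (‖x k‖ ^ 2 + ‖x (k + 1)‖ ^ 2) / 2 := by
    intro k
    have h1 : ‖f k‖ = ‖a k‖ * ‖x k‖ * ‖x (k + 1)‖ := by
      simp [hf, norm_mul]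
    rw [h1]
    have h2 : ‖x k‖ * ‖x (k + 1)‖ ≤ (‖x k‖ ^ 2 + ‖x (k + 1)‖ ^ 2) / 2 := by
      nlinarith [sq_nonneg (‖x k‖ - ‖x (k + 1)‖)]
    have h3 := hC k
    nlinarith [norm_nonneg (x k), norm_nonneg (x (k + 1)), norm_nonneg (a k),
      mul_nonneg (norm_nonneg (x k)) (norm_nonneg (x (k + 1)))]
  have hR : Summable (fun k => C * (‖x k‖ ^ 2 + ‖x (k + 1)‖ ^ 2) / 2) := by
    apply Summable.div_const
    exact (hg.add hg').mul_left C
  have hfn : Summable (fun k => ‖f k‖) :=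
    Summable.of_nonneg_of_le (fun k => norm_nonneg _) hb hR
  calc ‖∑' k, f k‖ ≤ ∑' k, ‖f k‖ := norm_tsum_le_tsum_norm hfn
    _ ≤ ∑' k, C * (‖x k‖ ^ 2 + ‖x (k + 1)‖ ^ 2) / 2 := Summable.tsum_le_tsum hb hfn hR
    _ = C * ((∑' k, ‖x k‖ ^ 2) + ∑' k, ‖x (k + 1)‖ ^ 2) / 2 := by
        rw [← Summable.tsum_add hg hg', ← tsum_mul_left, ← tsum_div_const]
    _ ≤ C := by
        have h4 : (∑' k, ‖x (k + 1)‖ ^ 2) ≤ 1 := by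
          have := Summable.tsum_eq_zero_add hg
          rw [hx1] at this
          have h5 : (0:ℝ) ≤ ‖x 0‖ ^ 2 := sq_nonneg _
          linarith
        rw [hx1]
        nlinarith

lemma aux_mem_numRange (a : ℕ → ℂ) (j n : ℕ) (hn : 0 < n) :
    (∑ k ∈ Finset.range (n - 1), a (k + j)) / (n : ℂ) ∈ numRange a := by
  set r : ℝ := (Real.sqrt n)⁻¹ with hr
  have hr0 : 0 ≤ r := by positivity
  have hrr : r * r = (n : ℝ)⁻¹ := by
    rw [hr, ← mul_inv, Real.mul_self_sqrt (Nat.cast_nonneg n)]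
  refine ⟨fun k => if k ∈ Finset.Ico j (j + n) then (r : ℂ) else 0, ?_, ?_⟩
  · rw [tsum_eq_sum (s := Finset.Ico j (j + n)) (fun b hb => by simp [hb])]
    have : ∀ b ∈ Finset.Ico j (j + n),
        ‖if b ∈ Finset.Ico j (j + n) then (r : ℂ) else 0‖ ^ 2 = (n : ℝ)⁻¹ := by
      intro b hb
      rw [if_pos hb, Complex.norm_real, Real.norm_eq_abs, abs_of_nonneg hr0, sq, hrr]
    rw [Finset.sum_congr rfl this, Finset.sum_const, Nat.card_Ico]
    simp only [add_tsub_cancel_left, nsmul_eq_mul]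
    field_simp
  · rw [tsum_eq_sum (s := Finset.Ico j (j + n - 1)) ?_]
    · have : ∀ b ∈ Finset.Ico j (j + n - 1),
          a b * (if b ∈ Finset.Ico j (j + n) then (r : ℂ) else 0) *
            (starRingEnd ℂ) (if b + 1 ∈ Finset.Ico j (j + n) then (r : ℂ) else 0)
          = a b * (n : ℂ)⁻¹ := by
        intro b hb
        simp only [Finset.mem_Ico] at hb
        rw [if_pos, if_pos, Complex.conj_ofReal, mul_assoc, ← Complex.ofReal_mul, hrr]
        · push_cast; ring
        · simp only [Finset.mem_Ico]; omega
        · simp only [Finset.mem_Ico]; omega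
      rw [Finset.sum_congr rfl this, ← Finset.sum_mul, div_eq_mul_inv,
        Finset.sum_Ico_eq_sum_range]
      congr 1
      · apply Finset.sum_congr (by congr 1; omega) (fun k _ => by rw [add_comm])
    · intro b hb
      simp only [Finset.mem_Ico] at hb
      by_cases h1 : b ∈ Finset.Ico j (j + n)
      · have h2 : b + 1 ∉ Finset.Ico j (j + n) := by
          simp only [Finset.mem_Ico] at h1 ⊢; omega
        simp [h2]
      · simp [h1]

theorem stmt5 (a a₁ a₂ : ℕ → ℂ) (N : ℕ) (hN : 0 < N)
    (hper : ∀ k, a₁ (k + N) = a₁ k) (l : ℂ) (hconv : Tendsto a₂ atTop (𝓝 l))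
    (hsum : ∀ k, a k = a₁ k + a₂ k) :
    ‖(∑ k ∈ Finset.range N, a₁ k) / (N : ℂ) + l‖ ≤ numRad a := by
  set S := ∑ k ∈ Finset.range N, a₁ k with hS
  -- periodicity lemmas
  have ha₁mul : ∀ x m : ℕ, a₁ (x + m * N) = a₁ x := by
    intro x m
    induction m with
    | zero => simp
    | succ m ih => rw [Nat.succ_mul, ← add_assoc, hper, ih]
  have hC₁ : ∀ k, ‖a₁ k‖ ≤ ∑ i ∈ Finset.range N, ‖a₁ i‖ := by
    intro k
    have h1 : a₁ k = a₁ (k % N) := by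
      conv_lhs => rw [← Nat.mod_add_div' k N]
      exact ha₁mul _ _
    rw [h1]
    exact Finset.single_le_sum (f := fun i => ‖a₁ i‖) (fun i _ => norm_nonneg _)
      (Finset.mem_range.2 (Nat.mod_lt _ hN))
  set C₁ := ∑ i ∈ Finset.range N, ‖a₁ i‖ with hC₁def
  have hC₁0 : 0 ≤ C₁ := Finset.sum_nonneg (fun i _ => norm_nonneg _)
  -- bound on a₂
  obtain ⟨C₂, hC₂⟩ : ∃ C₂, ∀ k, ‖a₂ k‖ ≤ C₂ := by
    obtain ⟨C₂, hC₂⟩ := (hconv.norm).bddAbove_range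
    exact ⟨C₂, fun k => hC₂ ⟨k, rfl⟩⟩
  -- global bound on a
  have haC : ∀ k, ‖a k‖ ≤ C₁ + C₂ := by
    intro k
    rw [hsum k]
    exact le_trans (norm_add_le _ _) (add_le_add (hC₁ k) (hC₂ k))
  -- bddAbove of image
  have hbdd : BddAbove ((fun z : ℂ => ‖z‖) '' numRange a) := by
    refine ⟨C₁ + C₂, ?_⟩
    rintro y ⟨z, hz, rfl⟩
    exact aux_norm_le_of_mem haC hz
  -- shifted period sums
  have hshift : ∀ j, ∑ k ∈ Finset.range N, a₁ (k + j) = S := by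
    intro j
    induction j with
    | zero => simp [hS]
    | succ j ih =>
      have h1 : ∑ k ∈ Finset.range N, a₁ (k + (j + 1)) =
          ∑ k ∈ Finset.range N, a₁ ((k + 1) + j) := by
        apply Finset.sum_congr rfl; intro k _; congr 1; omega
      have h2 := Finset.sum_range_succ' (fun i => a₁ (i + j)) N
      have h3 : a₁ (N + j) = a₁ (0 + j) := by
        rw [add_comm N j, hper j, zero_add]
      have h4 := Finset.sum_range_succ (fun i => a₁ (i + j)) N
      rw [h1]
      have := h2.symm.trans h4
      simp only [h3] at this
      -- this : (∑ i ∈ range N, a₁ (i + 1 + j)) + a₁ (0 + j) = (∑ i ∈ range N, a₁ (i + j)) + a₁ (0 + j)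
      have h5 : ∑ i ∈ Finset.range N, a₁ (i + 1 + j) = ∑ i ∈ Finset.range N, a₁ (i + j) := by
        linear_combination this
      rw [h5, ih]
  have hblock : ∀ m j, ∑ k ∈ Finset.range (m * N), a₁ (k + j) = (m : ℂ) * S := by
    intro m j
    induction m with
    | zero => simp
    | succ m ih =>
      have h1 : (m + 1) * N = m * N + N := by ring
      rw [h1, Finset.sum_range_add, ih]
      have h2 : ∀ k ∈ Finset.range N, a₁ (m * N + k + j) = a₁ (k + j) := by
        intro k _
        have : m * N + k + j = (k + j) + m * N := by omega
        rw [this, ha₁mul]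
      rw [Finset.sum_congr rfl h2, hshift]
      push_cast; ring
  -- epsilon argument
  apply le_of_forall_pos_le_add
  intro ε hε
  obtain ⟨j, hj⟩ := Metric.tendsto_atTop.mp hconv (ε / 2) (by linarith)
  obtain ⟨m₀, hm₀⟩ := exists_nat_ge ((C₁ + ‖l‖) / (ε / 2))
  set m := m₀ + 1 with hm
  set n := m * N with hn
  have hn1 : 1 ≤ n := Nat.one_le_iff_ne_zero.2 (by positivity)
  have hnR : (0:ℝ) < n := by exact_mod_cast hn1
  have hnC : (n : ℂ) ≠ 0 := Nat.cast_ne_zero.2 (Nat.one_le_iff_ne_zero.1 hn1)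
  have hNC : (N : ℂ) ≠ 0 := Nat.cast_ne_zero.2 hN.ne'
  have hnbig : C₁ + ‖l‖ ≤ n * (ε / 2) := by
    have h1 : (m₀ : ℝ) ≤ n := by
      have h0 : m₀ ≤ n := by
        rw [hn]
        exact le_trans (Nat.le_succ m₀) (Nat.le_mul_of_pos_right m hN)
      exact_mod_cast h0
    have h2 : (C₁ + ‖l‖) ≤ m₀ * (ε / 2) := by
      rw [div_le_iff₀ (by linarith)] at hm₀
      linarith
    nlinarith
  set z := (∑ k ∈ Finset.range (n - 1), a (k + j)) / (n : ℂ) with hz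
  have hzmem : z ∈ numRange a := aux_mem_numRange a j n (by omega)
  have hzle : ‖z‖ ≤ numRad a := le_csSup hbdd ⟨z, hzmem, rfl⟩
  -- compute the distance
  set T := S / (N : ℂ) + l with hT
  have hkey : ‖T - z‖ ≤ ε := by
    have hW : (∑ k ∈ Finset.range (n - 1), a (k + j)) =
        ((m : ℂ) * S - a₁ (n - 1 + j)) +
          ((∑ k ∈ Finset.range (n - 1), (a₂ (k + j) - l)) + ((n : ℂ) - 1) * l) := by
      have e1 : ∑ k ∈ Finset.range (n - 1), a (k + j) =
          (∑ k ∈ Finset.range (n - 1), a₁ (k + j)) +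
            ∑ k ∈ Finset.range (n - 1), a₂ (k + j) := by
        rw [← Finset.sum_add_distrib]
        exact Finset.sum_congr rfl (fun k _ => hsum _)
      have e2 : (∑ k ∈ Finset.range (n - 1), a₁ (k + j)) =
          (m : ℂ) * S - a₁ (n - 1 + j) := by
        have h6 : n = (n - 1) + 1 := by omega
        have h7 := Finset.sum_range_succ (fun k => a₁ (k + j)) (n - 1)
        have h8 : ∑ k ∈ Finset.range n, a₁ (k + j) = (m : ℂ) * S := hblock m j
        rw [h6] at h8
        rw [h7] at h8
        linear_combination h8
      have e3 : (∑ k ∈ Finset.range (n - 1), a₂ (k + j)) =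
          (∑ k ∈ Finset.range (n - 1), (a₂ (k + j) - l)) + ((n : ℂ) - 1) * l := by
        rw [Finset.sum_sub_distrib, Finset.sum_const, Finset.card_range, nsmul_eq_mul]
        have hcast : ((n - 1 : ℕ) : ℂ) = (n : ℂ) - 1 := by
          push_cast [Nat.cast_sub hn1]; ring
        rw [hcast]; ring
      rw [e1, e2, e3]
    have hTz : T - z = -((((m : ℂ) * S - a₁ (n - 1 + j)) +
        ((∑ k ∈ Finset.range (n - 1), (a₂ (k + j) - l)) + ((n : ℂ) - 1) * l)
          - ((m : ℂ) * S + (n : ℂ) * l)) / (n : ℂ)) := by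
      rw [hz, hW, hT]
      have hnN : (n : ℂ) = (m : ℂ) * (N : ℂ) := by rw [hn]; push_cast; ring
      field_simp
      rw [hnN]
      ring
    rw [hTz, norm_neg, norm_div, Complex.norm_natCast]
    rw [div_le_iff₀ hnR]
    have hnum : ‖(((m : ℂ) * S - a₁ (n - 1 + j)) +
        ((∑ k ∈ Finset.range (n - 1), (a₂ (k + j) - l)) + ((n : ℂ) - 1) * l)
          - ((m : ℂ) * S + (n : ℂ) * l))‖ ≤ C₁ + (n - 1 : ℕ) * (ε / 2) + ‖l‖ := by
      have hid : (((m : ℂ) * S - a₁ (n - 1 + j)) +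
          ((∑ k ∈ Finset.range (n - 1), (a₂ (k + j) - l)) + ((n : ℂ) - 1) * l)
            - ((m : ℂ) * S + (n : ℂ) * l))
          = -a₁ (n - 1 + j) + (∑ k ∈ Finset.range (n - 1), (a₂ (k + j) - l)) + -l := by
        ring
      rw [hid]
      have hE : ‖∑ k ∈ Finset.range (n - 1), (a₂ (k + j) - l)‖ ≤ (n - 1 : ℕ) * (ε / 2) := by
        calc ‖∑ k ∈ Finset.range (n - 1), (a₂ (k + j) - l)‖
            ≤ ∑ k ∈ Finset.range (n - 1), ‖a₂ (k + j) - l‖ := norm_sum_le _ _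
          _ ≤ ∑ k ∈ Finset.range (n - 1), (ε / 2) := by
              apply Finset.sum_le_sum
              intro k _
              have := hj (k + j) (by omega)
              rw [dist_eq_norm] at this
              linarith
          _ = (n - 1 : ℕ) * (ε / 2) := by rw [Finset.sum_const, Finset.card_range]; simp
      calc ‖-a₁ (n - 1 + j) + (∑ k ∈ Finset.range (n - 1), (a₂ (k + j) - l)) + -l‖
          ≤ ‖-a₁ (n - 1 + j) + (∑ k ∈ Finset.range (n - 1), (a₂ (k + j) - l))‖ + ‖-l‖ :=
            norm_add_le _ _
        _ ≤ ‖-a₁ (n - 1 + j)‖ + ‖∑ k ∈ Finset.range (n - 1), (a₂ (k + j) - l)‖ + ‖-l‖ := by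
            have := norm_add_le (-a₁ (n - 1 + j)) (∑ k ∈ Finset.range (n - 1), (a₂ (k + j) - l))
            linarith
        _ ≤ C₁ + (n - 1 : ℕ) * (ε / 2) + ‖l‖ := by
            rw [norm_neg, norm_neg]
            have := hC₁ (n - 1 + j)
            linarith
    have hstep : C₁ + (n - 1 : ℕ) * (ε / 2) + ‖l‖ ≤ ε * n := by
      have h9 : ((n - 1 : ℕ) : ℝ) ≤ (n : ℝ) := by
        exact_mod_cast Nat.cast_le.2 (Nat.sub_le n 1)
      nlinarith
    linarith
  calc ‖T‖ ≤ ‖z‖ + ‖T - z‖ := by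
        have := norm_add_le z (T - z); simpa using this
    _ ≤ numRad a + ε := add_le_add hzle hkey
end

section
/- For each m ∈ ℕ, the coordinate projection φ_m : ℓ^∞ → ℂ, φ_m(a) = a_m, has norm 1 with respect to the uniform norm and norm 2 with respect to the norm ‖a‖_w := w(T_a). -/
open Filter Finset Topology

set_option maxHeartbeats 1000000

-- summability from the constraint
lemma sq_summable {x : ℕ → ℂ} (hx : (∑' k, ‖x k‖ ^ 2) = (1 : ℝ)) :
    Summable (fun k => ‖x k‖ ^ 2) := by
  by_contra h
  rw [tsum_eq_zero_of_not_summable h] at hx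
  norm_num at hx

lemma key_bound {a : ℕ → ℂ} {C : ℝ} (hC : ∀ k, ‖a k‖ ≤ C) :
    ∀ y ∈ (fun z : ℂ => ‖z‖) '' numRange a, y ≤ C := by
  rintro y ⟨z, ⟨x, hx, rfl⟩, rfl⟩
  have hC0 : (0 : ℝ) ≤ C := le_trans (norm_nonneg _) (hC 0)
  have hs := sq_summable hx
  have hs1 : Summable (fun k => ‖x (k + 1)‖ ^ 2) :=
    hs.comp_injective (add_left_injective 1)
  have hmul : Summable (fun k => ‖x k‖ * ‖x (k + 1)‖) :=
    Summable.of_nonneg_of_le (fun k => by positivity)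
      (fun k => by nlinarith [sq_nonneg (‖x k‖ - ‖x (k + 1)‖)])
      ((hs.add hs1).div_const 2)
  have hbnd : ∀ k, ‖a k * x k * (starRingEnd ℂ) (x (k + 1))‖ ≤ C * (‖x k‖ * ‖x (k + 1)‖) := by
    intro k
    rw [norm_mul, norm_mul, RCLike.norm_conj, mul_assoc]
    exact mul_le_mul_of_nonneg_right (hC k) (by positivity)
  have hF : Summable (fun k => ‖a k * x k * (starRingEnd ℂ) (x (k + 1))‖) :=
    Summable.of_nonneg_of_le (fun k => norm_nonneg _) hbnd (hmul.mul_left C)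
  calc ‖∑' k, a k * x k * (starRingEnd ℂ) (x (k + 1))‖
      ≤ ∑' k, ‖a k * x k * (starRingEnd ℂ) (x (k + 1))‖ := norm_tsum_le_tsum_norm hF
    _ ≤ ∑' k, C * (‖x k‖ * ‖x (k + 1)‖) := Summable.tsum_le_tsum hbnd hF (hmul.mul_left C)
    _ = C * ∑' k, ‖x k‖ * ‖x (k + 1)‖ := tsum_mul_left
    _ ≤ C * 1 := by
        apply mul_le_mul_of_nonneg_left _ hC0
        have h1 : (∑' k, ‖x k‖ * ‖x (k + 1)‖) ≤ ∑' k, (‖x k‖ ^ 2 + ‖x (k + 1)‖ ^ 2) / 2 := by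
          apply Summable.tsum_le_tsum _ hmul ((hs.add hs1).div_const 2)
          intro k; nlinarith [sq_nonneg (‖x k‖ - ‖x (k + 1)‖)]
        have h2 : (∑' k, ‖x (k + 1)‖ ^ 2) ≤ ∑' k, ‖x k‖ ^ 2 := by
          have := Summable.tsum_eq_zero_add hs
          have h0 : (0:ℝ) ≤ ‖x 0‖ ^ 2 := by positivity
          linarith
        rw [tsum_div_const, Summable.tsum_add hs hs1, hx] at h1
        linarith
    _ = C := mul_one C

-- the halved element is in the range
lemma half_mem (a : ℕ → ℂ) (m : ℕ) :
    ‖a m‖ / 2 ∈ (fun z : ℂ => ‖z‖) '' numRange a := by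
  set s : ℝ := (Real.sqrt 2)⁻¹ with hs
  have hs0 : 0 ≤ s := by positivity
  have hssq : s ^ 2 = 1 / 2 := by
    rw [hs, inv_pow, Real.sq_sqrt (by norm_num : (0:ℝ) ≤ 2)]
    norm_num
  set x : ℕ → ℂ := fun k => if k = m ∨ k = m + 1 then (s : ℂ) else 0 with hxdef
  have hxm : x m = (s : ℂ) := by simp [hxdef]
  have hxm1 : x (m + 1) = (s : ℂ) := by simp [hxdef]
  have hx : (∑' k, ‖x k‖ ^ 2) = (1 : ℝ) := by
    have hsum : ∀ k ∉ ({m, m + 1} : Finset ℕ), ‖x k‖ ^ 2 = 0 := by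
      intro k hk
      simp only [Finset.mem_insert, Finset.mem_singleton] at hk
      push_neg at hk
      simp [hxdef, hk.1, hk.2]
    rw [tsum_eq_sum hsum, Finset.sum_insert (by simp), Finset.sum_singleton,
      hxm, hxm1, Complex.norm_real, Real.norm_eq_abs, abs_of_nonneg hs0, hssq]
    norm_num
  refine ⟨a m * (s : ℂ) * (starRingEnd ℂ) (s : ℂ), ⟨x, hx, ?_⟩, ?_⟩
  · rw [tsum_eq_single m]
    · rw [hxm, hxm1]
    · intro k hk
      rcases eq_or_ne k (m + 1) with rfl | hk1
      · have : x (m + 1 + 1) = 0 := by simp [hxdef]; omega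
        simp [this]
      · have : x k = 0 := by simp [hxdef]; omega
        simp [this]
  · show ‖a m * (s:ℂ) * (starRingEnd ℂ) (s:ℂ)‖ = ‖a m‖ / 2
    rw [Complex.conj_ofReal, mul_assoc, ← Complex.ofReal_mul, ← pow_two, hssq, norm_mul,
      Complex.norm_real]
    norm_num
    ring

lemma numRad_ge (a : ℕ → ℂ) (ha : IsBddSeq a) (m : ℕ) : ‖a m‖ / 2 ≤ numRad a := by
  obtain ⟨C, hC⟩ := ha
  exact le_csSup ⟨C, fun y hy => key_bound hC y hy⟩ (half_mem a m)

-- indicator sequence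
noncomputable def eSeq (m : ℕ) : ℕ → ℂ := fun k => if k = m then 1 else 0

lemma eSeq_bound (m : ℕ) : ∀ k, ‖eSeq m k‖ ≤ 1 := by
  intro k; by_cases h : k = m <;> simp [eSeq, h]

lemma numRad_eSeq_le (m : ℕ) : numRad (eSeq m) ≤ 1 / 2 := by
  apply csSup_le ⟨_, half_mem (eSeq m) m⟩
  rintro y ⟨z, ⟨x, hx, rfl⟩, rfl⟩
  have hs := sq_summable hx
  have hz : (∑' k, eSeq m k * x k * (starRingEnd ℂ) (x (k + 1)))
      = x m * (starRingEnd ℂ) (x (m + 1)) := by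
    rw [tsum_eq_single m]
    · simp [eSeq]
    · intro k hk; simp [eSeq, hk]
  show ‖∑' k, eSeq m k * x k * (starRingEnd ℂ) (x (k + 1))‖ ≤ 1 / 2
  rw [hz, norm_mul, RCLike.norm_conj]
  have hle : ‖x m‖ ^ 2 + ‖x (m + 1)‖ ^ 2 ≤ 1 := by
    have := Summable.sum_le_tsum ({m, m + 1} : Finset ℕ) (fun k _ => by positivity) hs
    rw [Finset.sum_insert (by simp), Finset.sum_singleton, hx] at this
    exact this
  nlinarith [sq_nonneg (‖x m‖ - ‖x (m + 1)‖), norm_nonneg (x m), norm_nonneg (x (m+1))]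

theorem stmt8 (m : ℕ) :
    IsLeast {c : ℝ | 0 ≤ c ∧ ∀ a : ℕ → ℂ, IsBddSeq a → ‖a m‖ ≤ c * supNorm a} 1 ∧
    IsLeast {c : ℝ | 0 ≤ c ∧ ∀ a : ℕ → ℂ, IsBddSeq a → ‖a m‖ ≤ c * numRad a} 2 := by
  constructor
  · constructor
    · refine ⟨zero_le_one, fun a ha => ?_⟩
      obtain ⟨C, hC⟩ := ha
      rw [one_mul, supNorm]
      exact le_ciSup ⟨C, by rintro y ⟨k, rfl⟩; exact hC k⟩ m
    · rintro c ⟨hc0, hc⟩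
      have h := hc (eSeq m) ⟨1, eSeq_bound m⟩
      have h1 : ‖eSeq m m‖ = 1 := by simp [eSeq]
      have hsup : supNorm (eSeq m) = 1 := by
        apply le_antisymm
        · exact ciSup_le (eSeq_bound m)
        · rw [supNorm, ← h1]
          exact le_ciSup (f := fun k => ‖eSeq m k‖)
            ⟨1, by rintro y ⟨k, rfl⟩; exact eSeq_bound m k⟩ m
      rw [h1, hsup, mul_one] at h
      exact h
  · constructor
    · refine ⟨by norm_num, fun a ha => ?_⟩
      have := numRad_ge a ha m
      linarith
    · rintro c ⟨hc0, hc⟩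
      have h := hc (eSeq m) ⟨1, eSeq_bound m⟩
      have h1 : ‖eSeq m m‖ = 1 := by simp [eSeq]
      have h2 := numRad_eSeq_le m
      rw [h1] at h
      nlinarith
end

section
/- Let K > 0 and a ∈ ℓ^∞ with |a_k| ≤ K for all k and lim_{n→∞} sup_{j∈ℕ} (1/n) Σ_{k=1}^n |a_{k+j-1}| = K. Then the numerical range W(T_a) equals the open disk {z ∈ ℂ : |z| < K}. -/
open Filter Finset Topology

set_option maxHeartbeats 1000000


noncomputable def dir (w : ℂ) : ℂ := if w = 0 then 1 else w / ‖w‖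

lemma norm_dir (w : ℂ) : ‖dir w‖ = 1 := by
  unfold dir
  split
  · simp
  · rename_i hw
    rw [norm_div, Complex.norm_real, Real.norm_eq_abs, abs_of_nonneg (norm_nonneg w),
      div_self (norm_ne_zero_iff.mpr hw)]

lemma mul_conj_dir (w : ℂ) : w * (starRingEnd ℂ) (dir w) = (‖w‖ : ℂ) := by
  unfold dir
  split
  · rename_i hw; simp [hw]
  · rename_i hw
    have h0 : (‖w‖ : ℂ) ≠ 0 := by
      exact_mod_cast norm_ne_zero_iff.mpr hw
    rw [map_div₀, Complex.conj_ofReal, mul_div_assoc', Complex.mul_conj',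
      sq, mul_div_assoc, div_self h0, mul_one]

noncomputable def phase (a : ℕ → ℂ) (u : ℂ) : ℕ → ℂ
  | 0 => 1
  | k+1 => phase a u k * dir (a k) * (starRingEnd ℂ) u

lemma norm_phase (a : ℕ → ℂ) (u : ℂ) (hu : ‖u‖ = 1) : ∀ k, ‖phase a u k‖ = 1
  | 0 => by simp [phase]
  | k+1 => by
      show ‖phase a u k * dir (a k) * (starRingEnd ℂ) u‖ = 1
      rw [norm_mul, norm_mul, norm_phase a u hu k, norm_dir, RCLike.norm_conj, hu]
      norm_num

lemma phase_spec (a : ℕ → ℂ) (u : ℂ) (hu : ‖u‖ = 1) (k : ℕ) :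
    a k * phase a u k * (starRingEnd ℂ) (phase a u (k+1)) = (‖a k‖ : ℂ) * u := by
  have h1 : phase a u k * (starRingEnd ℂ) (phase a u k) = 1 := by
    rw [Complex.mul_conj', norm_phase a u hu k]
    norm_num
  show a k * phase a u k *
      (starRingEnd ℂ) (phase a u k * dir (a k) * (starRingEnd ℂ) u) = _
  rw [map_mul, map_mul, Complex.conj_conj]
  calc a k * phase a u k * ((starRingEnd ℂ) (phase a u k) * (starRingEnd ℂ) (dir (a k)) * u)
      = (phase a u k * (starRingEnd ℂ) (phase a u k)) * (a k * (starRingEnd ℂ) (dir (a k))) * u := by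
        ring
    _ = (‖a k‖ : ℂ) * u := by rw [h1, mul_conj_dir]; ring


lemma forward_aux (a : ℕ → ℂ) (K : ℝ) (hK : 0 < K) (hb : ∀ k, ‖a k‖ ≤ K)
    (x : ℕ → ℂ) (hx1 : (∑' k, ‖x k‖ ^ 2) = (1 : ℝ)) :
    ‖∑' k, a k * x k * (starRingEnd ℂ) (x (k + 1))‖ < K := by
  classical
  have hf : Summable (fun k => ‖x k‖ ^ 2) := by
    by_contra hc
    rw [tsum_eq_zero_of_not_summable hc] at hx1; norm_num at hx1
  have hex : ∃ m, x m ≠ 0 := by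
    by_contra hc; push_neg at hc
    simp [hc] at hx1
  set m := Nat.find hex with hmdef
  have hm : x m ≠ 0 := Nat.find_spec hex
  have hmin : ∀ k < m, x k = 0 := by
    intro k hk
    by_contra hc
    exact Nat.find_min hex hk hc
  set y : ℕ → ℝ := fun k => ‖x (k + m)‖ with hy
  have hfy : Summable (fun k => y k ^ 2) := (summable_nat_add_iff m).mpr hf
  have hy1 : (∑' k, y k ^ 2) = 1 := by
    have h2 := Summable.sum_add_tsum_nat_add m hf
    have h3 : ∑ i ∈ Finset.range m, ‖x i‖ ^ 2 = 0 :=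
      Finset.sum_eq_zero (fun i hi => by rw [hmin i (Finset.mem_range.mp hi)]; simp)
    rw [hx1, h3, zero_add] at h2
    exact h2
  have hfy1 : Summable (fun k => y (k + 1) ^ 2) := (summable_nat_add_iff 1).mpr hfy
  have hy2 : (∑' k, y (k + 1) ^ 2) = 1 - y 0 ^ 2 := by
    have h2 := Summable.sum_add_tsum_nat_add 1 hfy
    rw [hy1, Finset.sum_range_one] at h2
    linarith
  have hprod_le : ∀ k, y k * y (k + 1) ≤ (y k ^ 2 + y (k + 1) ^ 2) / 2 := by
    intro k; nlinarith [sq_nonneg (y k - y (k + 1))]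
  have hbound : Summable (fun k => (y k ^ 2 + y (k + 1) ^ 2) / 2) := (hfy.add hfy1).div_const 2
  have hynn : ∀ k, (0:ℝ) ≤ y k * y (k + 1) :=
    fun k => mul_nonneg (norm_nonneg _) (norm_nonneg _)
  have hprod_sum : Summable (fun k => y k * y (k + 1)) :=
    Summable.of_nonneg_of_le hynn hprod_le hbound
  have hS2 : (∑' k, y k * y (k + 1)) ≤ 1 - y 0 ^ 2 / 2 := by
    have h4 := Summable.tsum_le_tsum hprod_le hprod_sum hbound
    have heq : (∑' k, (y k ^ 2 + y (k + 1) ^ 2) / 2) = 1 - y 0 ^ 2 / 2 := by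
      rw [tsum_div_const, Summable.tsum_add hfy hfy1, hy1, hy2]; ring
    linarith
  -- relate shifted sum to原 sum
  have hxy : (∑' k, ‖x k‖ * ‖x (k + 1)‖) = ∑' k, y k * y (k + 1) := by
    set F : ℕ → ℝ := fun k => ‖x k‖ * ‖x (k + 1)‖ with hF
    have h5 : ∑' k, F (k + m) = ∑' k, F k := by
      refine Function.Injective.tsum_eq (add_left_injective m) ?_
      intro k hk
      simp only [Function.mem_support] at hk
      rcases le_or_gt m k with hle | hlt
      · exact ⟨k - m, by simp; omega⟩
      · exact absurd (show F k = 0 by simp only [hF]; rw [hmin k hlt]; simp) hk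
    rw [← h5]
    refine tsum_congr (fun k => ?_)
    simp only [hy, hF]
    rw [show k + 1 + m = k + m + 1 by omega]
  have hf1 : Summable (fun k => ‖x (k + 1)‖ ^ 2) := (summable_nat_add_iff 1).mpr hf
  have hxprod : Summable (fun k => ‖x k‖ * ‖x (k + 1)‖) := by
    refine Summable.of_nonneg_of_le (fun k => mul_nonneg (norm_nonneg _) (norm_nonneg _))
      (fun k => ?_) ((hf.add hf1).div_const 2)
    nlinarith [sq_nonneg (‖x k‖ - ‖x (k + 1)‖)]
  have hgle : ∀ k, ‖a k * x k * (starRingEnd ℂ) (x (k + 1))‖ ≤ K * (‖x k‖ * ‖x (k + 1)‖) := by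
    intro k
    rw [norm_mul, norm_mul, RCLike.norm_conj]
    have h6 := hb k
    have h7 : (0:ℝ) ≤ ‖x k‖ * ‖x (k + 1)‖ := mul_nonneg (norm_nonneg _) (norm_nonneg _)
    nlinarith [norm_nonneg (x k), norm_nonneg (x (k+1))]
  have hKprod : Summable (fun k => K * (‖x k‖ * ‖x (k + 1)‖)) := hxprod.mul_left K
  have hgsum : Summable (fun k => ‖a k * x k * (starRingEnd ℂ) (x (k + 1))‖) :=
    Summable.of_nonneg_of_le (fun k => norm_nonneg _) hgle hKprod
  have hy0 : 0 < y 0 := by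
    simp only [hy, zero_add]
    exact norm_pos_iff.mpr hm
  calc ‖∑' k, a k * x k * (starRingEnd ℂ) (x (k + 1))‖
      ≤ ∑' k, ‖a k * x k * (starRingEnd ℂ) (x (k + 1))‖ := norm_tsum_le_tsum_norm hgsum
    _ ≤ ∑' k, K * (‖x k‖ * ‖x (k + 1)‖) := Summable.tsum_le_tsum hgle hgsum hKprod
    _ = K * ∑' k, ‖x k‖ * ‖x (k + 1)‖ := tsum_mul_left
    _ = K * ∑' k, y k * y (k + 1) := by rw [hxy]
    _ ≤ K * (1 - y 0 ^ 2 / 2) := mul_le_mul_of_nonneg_left hS2 hK.le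
    _ < K := by nlinarith [mul_pos hK (pow_pos hy0 2)]

lemma backward_aux (a : ℕ → ℂ) (K : ℝ) (hK : 0 < K) (hb : ∀ k, ‖a k‖ ≤ K)
    (h : Tendsto (avgSup a) atTop (𝓝 K)) (z : ℂ) (hz : ‖z‖ < K) :
    ∃ x : ℕ → ℂ, (∑' k, ‖x k‖ ^ 2) = (1 : ℝ) ∧
      z = ∑' k, a k * x k * (starRingEnd ℂ) (x (k + 1)) := by
  classical
  set r := ‖z‖ with hrdef
  have hr0 : 0 ≤ r := norm_nonneg z
  set ε : ℝ := (K - r) / 4 with hεdef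
  have hε0 : 0 < ε := by simp only [hεdef]; linarith
  obtain ⟨N, hN⟩ := Metric.tendsto_atTop.mp h ε hε0
  obtain ⟨M, hM⟩ := exists_nat_gt (K / ε)
  set n : ℕ := max (max N 2) (M + 1) with hndef
  have hn2 : 2 ≤ n := le_trans (le_max_right N 2) (le_max_left _ _)
  have hnN : N ≤ n := le_trans (le_max_left N 2) (le_max_left _ _)
  have hnpos : (0:ℝ) < n := by positivity
  have hnM : (M:ℝ) ≤ n := by
    have : M + 1 ≤ n := le_max_right _ _
    exact_mod_cast le_trans (Nat.le_succ M) this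
  have hnK : K / n < ε := by
    rw [div_lt_iff₀ hnpos]
    have : K / ε < (n:ℝ) := lt_of_lt_of_le hM hnM
    rw [div_lt_iff₀ hε0] at this
    linarith
  have havg : K - ε < avgSup a n := by
    have h1 := hN n hnN
    rw [Real.dist_eq] at h1
    have := abs_lt.mp h1
    linarith [this.1]
  obtain ⟨j, hj⟩ : ∃ j, K - ε < (∑ k ∈ Finset.range n, ‖a (k + j)‖) / n :=
    exists_lt_of_lt_ciSup havg
  set s : ℝ := (∑ k ∈ Finset.range (n - 1), ‖a (k + j)‖) / n with hsdef
  have hsplit : ∑ k ∈ Finset.range n, ‖a (k + j)‖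
      = (∑ k ∈ Finset.range (n - 1), ‖a (k + j)‖) + ‖a (n - 1 + j)‖ := by
    conv_lhs => rw [show n = (n - 1) + 1 by omega]
    rw [Finset.sum_range_succ]
  have hrs : r < s := by
    have h1 : ‖a (n - 1 + j)‖ ≤ K := hb _
    have h2 : s ≥ (∑ k ∈ Finset.range n, ‖a (k + j)‖) / n - K / n := by
      rw [hsdef, hsplit, add_div]
      have : ‖a (n - 1 + j)‖ / n ≤ K / n := by gcongr
      linarith
    have h3 : K - ε - ε < s := by linarith
    simp only [hεdef] at h3
    linarith
  have hs0 : 0 < s := lt_of_le_of_lt hr0 hrs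
  set u : ℂ := if z = 0 then 1 else z / (r : ℂ) with hudef
  have hu : ‖u‖ = 1 := by
    simp only [hudef]
    split
    · simp
    · rename_i hz0
      rw [norm_div, Complex.norm_real, Real.norm_eq_abs, abs_of_nonneg hr0]
      exact div_self (norm_ne_zero_iff.mpr hz0)
  have huz : (r : ℂ) * u = z := by
    simp only [hudef]
    split
    · rename_i hz0
      simp [hrdef, hz0]
    · rename_i hz0
      have hc : (r : ℂ) ≠ 0 := by
        exact_mod_cast (fun hh => hz0 (norm_eq_zero.mp hh) : r ≠ 0)
      field_simp
  set p := phase a u with hpdef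
  set α : ℝ := Real.sqrt (r / s) / Real.sqrt n with hαdef
  set β : ℝ := Real.sqrt (1 - r / s) with hβdef
  have hrs1 : r / s ≤ 1 := by rw [div_le_one hs0]; linarith
  have hα2 : α ^ 2 = r / s / n := by
    rw [hαdef, div_pow, Real.sq_sqrt (by positivity), Real.sq_sqrt hnpos.le]
  have hβ2 : β ^ 2 = 1 - r / s := Real.sq_sqrt (by linarith)
  set x : ℕ → ℂ := fun k =>
    if k ∈ Finset.Ico j (j + n) then (α : ℂ) * p k
    else if k = j + n + 1 then (β : ℂ) else 0 with hxdef
  have hxn : ∀ k, ‖x k‖ ^ 2 =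
      if k ∈ Finset.Ico j (j + n) then α ^ 2 else if k = j + n + 1 then β ^ 2 else 0 := by
    intro k
    simp only [hxdef]
    split
    · rw [norm_mul, hpdef, norm_phase a u hu, mul_one, Complex.norm_real,
        Real.norm_eq_abs, sq_abs]
    · split
      · rw [Complex.norm_real, Real.norm_eq_abs, sq_abs]
      · simp
  refine ⟨x, ?_, ?_⟩
  · have hsupp : ∀ k ∉ Finset.Ico j (j + n) ∪ {j + n + 1}, ‖x k‖ ^ 2 = 0 := by
      intro k hk
      rw [Finset.mem_union, Finset.mem_singleton] at hk
      push_neg at hk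
      rw [hxn k, if_neg hk.1, if_neg hk.2]
    have hdisj : Disjoint (Finset.Ico j (j + n)) ({j + n + 1} : Finset ℕ) :=
      Finset.disjoint_singleton_right.mpr (by rw [Finset.mem_Ico]; omega)
    rw [tsum_eq_sum hsupp, Finset.sum_union hdisj]
    have e1 : ∑ k ∈ Finset.Ico j (j + n), ‖x k‖ ^ 2 = n * (r / s / n) := by
      rw [Finset.sum_congr rfl (fun k hk => by rw [hxn k, if_pos hk]), Finset.sum_const,
        Nat.card_Ico, hα2]
      simp [mul_comm]
    have e2 : ∑ k ∈ ({j + n + 1} : Finset ℕ), ‖x k‖ ^ 2 = 1 - r / s := by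
      rw [Finset.sum_singleton, hxn, if_neg (by rw [Finset.mem_Ico]; omega), if_pos rfl, hβ2]
    rw [e1, e2]
    field_simp
    ring
  · have hg0 : ∀ k ∉ Finset.Ico j (j + n - 1),
        a k * x k * (starRingEnd ℂ) (x (k + 1)) = 0 := by
      intro k hk
      rw [Finset.mem_Ico] at hk
      push_neg at hk
      by_cases h1 : k ∈ Finset.Ico j (j + n)
      · rw [Finset.mem_Ico] at h1
        have hx1 : x (k + 1) = 0 := by
          simp only [hxdef]
          rw [if_neg (by rw [Finset.mem_Ico]; omega), if_neg (by omega)]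
        rw [hx1]; simp
      · by_cases h2 : k = j + n + 1
        · rw [Finset.mem_Ico] at h1
          have hx1 : x (k + 1) = 0 := by
            simp only [hxdef]
            rw [if_neg (by rw [Finset.mem_Ico]; omega), if_neg (by omega)]
          rw [hx1]; simp
        · have hx0 : x k = 0 := by
            simp only [hxdef]
            rw [if_neg (by simpa using h1), if_neg h2]
          rw [hx0]; simp
    have hterm : ∀ k ∈ Finset.Ico j (j + n - 1),
        a k * x k * (starRingEnd ℂ) (x (k + 1)) = ((α ^ 2 : ℝ) : ℂ) * ((‖a k‖ : ℝ) : ℂ) * u := by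
      intro k hk
      rw [Finset.mem_Ico] at hk
      have hk1 : k ∈ Finset.Ico j (j + n) := by rw [Finset.mem_Ico]; omega
      have hk2 : k + 1 ∈ Finset.Ico j (j + n) := by rw [Finset.mem_Ico]; omega
      simp only [hxdef]
      rw [if_pos hk1, if_pos hk2, map_mul, Complex.conj_ofReal]
      calc a k * ((α : ℂ) * p k) * ((α : ℂ) * (starRingEnd ℂ) (p (k + 1)))
          = ((α : ℂ) * α) * (a k * p k * (starRingEnd ℂ) (p (k + 1))) := by ring
        _ = _ := by rw [hpdef, phase_spec a u hu k]; push_cast; ring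
    rw [tsum_eq_sum hg0, Finset.sum_congr rfl hterm]
    have key : ∑ k ∈ Finset.Ico j (j + n - 1), ‖a k‖ = s * n := by
      rw [Finset.sum_Ico_eq_sum_range, show j + n - 1 - j = n - 1 by omega,
        Finset.sum_congr rfl (fun k _ => by rw [add_comm j k]), hsdef]
      field_simp
    have hassemble : ∑ k ∈ Finset.Ico j (j + n - 1), ((α ^ 2 : ℝ) : ℂ) * ((‖a k‖ : ℝ) : ℂ) * u
        = ((α ^ 2 : ℝ) : ℂ) * ((s * n : ℝ) : ℂ) * u := by
      rw [← key]
      push_cast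
      rw [← Finset.sum_mul, ← Finset.mul_sum]
    rw [hassemble, hα2]
    have harith : ((r / s / (n : ℝ) : ℝ) : ℂ) * ((s * n : ℝ) : ℂ) = (r : ℂ) := by
      rw [← Complex.ofReal_mul]
      norm_cast
      field_simp
    rw [harith, huz]


theorem stmt9 (a : ℕ → ℂ) (K : ℝ) (hK : 0 < K) (hb : ∀ k, ‖a k‖ ≤ K)
    (h : Tendsto (avgSup a) atTop (𝓝 K)) :
    numRange a = {z : ℂ | ‖z‖ < K} := by
  ext z
  simp only [numRange, Set.mem_setOf_eq]
  constructor
  · rintro ⟨x, hx1, rfl⟩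
    exact forward_aux a K hK hb x hx1
  · intro hz
    exact backward_aux a K hK hb h z hz
end
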